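/- With notation as above, the map τ : TM₁(R) → End_{R-alg}(R⟨⟨x₀,x₁⟩⟩), Φ ↦ κ_Φ, satisfies τ(Φ₁ ⊛₁ Φ₂) = τ(Φ₁) ∘ τ(Φ₂), and is injective: κ_{Φ₁} = κ_{Φ₂} implies Φ₁ = Φ₂. -/

import Mathlib

/-!
When `f` has no constant term, `κ_f` is multiplicative for the concatenation product, fixes `1`
and `x₀` and sends `x₁` to `f`; the coefficient of `κ_f(Φ)` at `w` only involves words of length
at most `|w|`, which keeps all sums finite. Being multiplicative, `κ_f` sends the image `κ_g(v)`
of a word `v` to `κ_{κ_f(g)}(v)`, and summing over `v` gives `κ_{κ_f(g)} = κ_f ∘ κ_g`.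
Injectivity follows from `κ_Φ(x₁) = Φ`.
-/

/-- Words in the letters x₀, x₁ (0 ↦ x₀, 1 ↦ x₁). -/
abbrev W : Type := List (Fin 2)

variable {R : Type*} [CommRing R] [Algebra ℚ R]

/-- The generator x₁ of R⟨⟨x₀,x₁⟩⟩ (series realized as coefficient functions on words). -/
def x1R : W → R := fun w => if w = [(1 : Fin 2)] then 1 else 0

/-- The generator x₀ of R⟨⟨x₀,x₁⟩⟩. -/
def x0R : W → R := fun w => if w = [(0 : Fin 2)] then 1 else 0

/-- The unit 1 of R⟨⟨x₀,x₁⟩⟩. -/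
def oneR : W → R := fun w => if w = [] then 1 else 0

/-- The concatenation product of series. -/
def cmulR (f g : W → R) : W → R := fun w =>
  ∑ i ∈ Finset.range (w.length + 1), f (w.take i) * g (w.drop i)

/-- The image under the continuous R-algebra endomorphism κ_f (x₀ ↦ x₀, x₁ ↦ f) of a
single word, as a series: the concatenation product of the images of its letters. -/
def wordImage (f : W → R) : W → (W → R)
  | [] => oneR
  | a :: t => cmulR (if a = (1 : Fin 2) then f else x0R) (wordImage f t)

/-- κ_f applied to a series Φ: Σ_w ⟨Φ|w⟩ κ_f(w).  For f with vanishing constant term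
(in particular f ∈ TM₁(R)) only words of length ≤ |w'| contribute to the coefficient
at w', so the sum below computes κ_f(Φ). -/
def kappa (f Φ : W → R) : W → R := fun w =>
  ∑ n ∈ Finset.range (w.length + 1), ∑ v : Fin n → Fin 2,
    Φ (List.ofFn v) * wordImage f (List.ofFn v) w

/-- Membership in TM₁(R): ⟨Φ | x₀^k⟩ = 0 for all k ≥ 0 (including the constant term)
and ⟨Φ | x₁⟩ = 1. -/
def TM1mem (Φ : W → R) : Prop :=
  (∀ k : ℕ, Φ (List.replicate k (0 : Fin 2)) = 0) ∧ Φ [(1 : Fin 2)] = 1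

omit [Algebra ℚ R]

open Finset

theorem cmulR_oneR (A : W → R) : cmulR A oneR = A := by
  funext w
  rw [cmulR, sum_eq_single w.length]
  · simp [oneR]
  · intro i hi hne
    have : w.drop i ≠ [] := by
      rw [mem_range] at hi
      simp only [ne_eq, List.drop_eq_nil_iff]
      omega
    simp [oneR, this]
  · simp

theorem oneR_cmulR (A : W → R) : cmulR oneR A = A := by
  funext w
  rw [cmulR, sum_eq_single 0]
  · simp [oneR]
  · intro i hi hne
    rw [mem_range] at hi
    have : w.take i ≠ [] := List.ne_nil_of_length_pos (by rw [List.length_take]; omega)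
    simp [oneR, this]
  · simp

theorem cmulR_cmulR_apply (A B C : W → R) (w : W) :
    cmulR (cmulR A B) C w = ∑ i ∈ range (w.length + 1), ∑ j ∈ range (i + 1),
      A (w.take j) * (B ((w.drop j).take (i - j)) * C (w.drop i)) := by
  refine sum_congr rfl fun i hi => ?_
  rw [mem_range] at hi
  have hlen : (w.take i).length = i := by rw [List.length_take]; omega
  rw [cmulR, hlen, sum_mul]
  refine sum_congr rfl fun j hj => ?_
  rw [mem_range] at hj
  rw [List.take_take, Nat.min_eq_left (by omega), List.drop_take, mul_assoc]

theorem cmulR_assoc (A B C : W → R) : cmulR (cmulR A B) C = cmulR A (cmulR B C) := by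
  funext w
  rw [cmulR_cmulR_apply, sum_comm' (t' := range (w.length + 1))
    (s' := fun j => Ico j (w.length + 1))]
  · refine sum_congr rfl fun j hj => ?_
    rw [mem_range] at hj
    rw [sum_Ico_eq_sum_range, cmulR, List.length_drop, mul_sum,
      Nat.sub_add_comm (Nat.le_of_lt_succ hj)]
    refine sum_congr rfl fun k _ => ?_
    simp only [Nat.add_sub_cancel_left, List.drop_drop]
  · intro i j
    simp only [mem_range, mem_Ico]
    omega

def wordsUpTo (N : ℕ) : Finset W :=
  (range (N + 1)).biUnion fun n => univ.image (List.ofFn : (Fin n → Fin 2) → W)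

theorem mem_wordsUpTo {N : ℕ} {v : W} : v ∈ wordsUpTo N ↔ v.length ≤ N := by
  simp only [wordsUpTo, mem_biUnion, mem_range, mem_image, mem_univ, true_and]
  constructor
  · rintro ⟨n, hn, u, rfl⟩
    simpa using Nat.le_of_lt_succ hn
  · intro h
    exact ⟨v.length, Nat.lt_succ_of_le h, v.get, List.ofFn_get v⟩

theorem kappa_apply (f Φ : W → R) (w : W) :
    kappa f Φ w = ∑ v ∈ wordsUpTo w.length, Φ v * wordImage f v w := by
  rw [wordsUpTo, sum_biUnion]
  · exact sum_congr rfl fun n _ => by rw [sum_image fun _ _ _ _ h => List.ofFn_injective h]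
  · intro m _ n _ hmn
    refine disjoint_left.mpr fun v hvm hvn => hmn ?_
    simp only [mem_image, mem_univ, true_and] at hvm hvn
    obtain ⟨u, rfl⟩ := hvm
    obtain ⟨u', hu'⟩ := hvn
    simpa using congrArg List.length hu'.symm

theorem sum_wordsUpTo_sum_take_drop {M : Type*} [AddCommMonoid M] (N : ℕ) (F : W → W → M) :
    ∑ v ∈ wordsUpTo N, ∑ i ∈ range (v.length + 1), F (v.take i) (v.drop i) =
      ∑ p ∈ wordsUpTo N, ∑ q ∈ wordsUpTo N, if p.length + q.length ≤ N then F p q else 0 := by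
  rw [sum_sigma', ← sum_product', ← sum_filter]
  refine sum_nbij' (fun x => (x.1.take x.2, x.1.drop x.2)) (fun x => ⟨x.1 ++ x.2, x.1.length⟩)
    ?_ ?_ ?_ ?_ fun _ _ => rfl
  · rintro ⟨v, i⟩ h
    simp only [mem_sigma, mem_range, mem_wordsUpTo] at h
    simp only [mem_filter, mem_product, mem_wordsUpTo, List.length_take, List.length_drop]
    omega
  · rintro ⟨p, q⟩ h
    simp only [mem_filter, mem_product, mem_wordsUpTo] at h
    simp only [mem_sigma, mem_range, mem_wordsUpTo, List.length_append]
    omega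
  · rintro ⟨v, i⟩ h
    simp only [mem_sigma, mem_range, mem_wordsUpTo] at h
    simp only [List.take_append_drop, List.length_take, Sigma.mk.injEq, true_and]
    rw [Nat.min_eq_left (by omega)]
  · rintro ⟨p, q⟩ _
    simp

theorem wordImage_append (f : W → R) (p q : W) :
    wordImage f (p ++ q) = cmulR (wordImage f p) (wordImage f q) := by
  induction p with
  | nil => exact (oneR_cmulR _).symm
  | cons a t ih => simp only [List.cons_append, wordImage, ih, cmulR_assoc]

theorem wordImage_singleton (f : W → R) (a : Fin 2) :
    wordImage f [a] = if a = 1 then f else x0R :=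
  cmulR_oneR _

section ZeroConstantTerm

variable {f : W → R} (hf : f [] = 0)
include hf

theorem wordImage_apply_eq_zero_of_length_lt {v w : W} (h : w.length < v.length) :
    wordImage f v w = 0 := by
  induction v generalizing w with
  | nil => simp at h
  | cons a t ih =>
    rw [wordImage, cmulR]
    refine sum_eq_zero fun i hi => ?_
    rw [mem_range] at hi
    rcases Nat.eq_zero_or_pos i with rfl | hi₀
    · have : (if a = 1 then f else x0R) [] = 0 := by split_ifs <;> simp [hf, x0R]
      simp [this]
    · rw [ih (by simp only [List.length_drop, List.length_cons] at h ⊢; omega), mul_zero]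

theorem kappa_apply_eq_sum (Φ : W → R) {N : ℕ} {w : W} (h : w.length ≤ N) :
    kappa f Φ w = ∑ v ∈ wordsUpTo N, Φ v * wordImage f v w := by
  rw [kappa_apply]
  refine sum_subset (fun v hv => ?_) fun v _ hv => ?_
  · rw [mem_wordsUpTo] at hv ⊢
    omega
  · rw [mem_wordsUpTo, not_le] at hv
    rw [wordImage_apply_eq_zero_of_length_lt hf hv, mul_zero]

theorem kappa_single (v : W) : kappa f (fun u => if u = v then 1 else 0) = wordImage f v := by
  funext w
  rw [kappa_apply_eq_sum hf _ (le_max_left w.length v.length)]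
  simp only [ite_mul, one_mul, zero_mul, sum_ite_eq', mem_wordsUpTo, le_max_right, if_true]

theorem kappa_oneR : kappa f oneR = oneR :=
  kappa_single hf []

theorem kappa_x0R : kappa f x0R = x0R :=
  (kappa_single hf [0]).trans (wordImage_singleton f 0)

theorem kappa_x1R : kappa f x1R = f :=
  (kappa_single hf [1]).trans (wordImage_singleton f 1)

theorem kappa_cmulR (A B : W → R) :
    kappa f (cmulR A B) = cmulR (kappa f A) (kappa f B) := by
  funext w
  have hsplit (v : W) : cmulR A B v * wordImage f v w = ∑ i ∈ range (v.length + 1),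
      A (v.take i) * B (v.drop i) * wordImage f (v.take i ++ v.drop i) w := by
    simp only [cmulR, sum_mul, List.take_append_drop]
  have hvanish (p q : W) :
      (if p.length + q.length ≤ w.length then A p * B q * wordImage f (p ++ q) w else 0) =
        A p * B q * wordImage f (p ++ q) w := by
    split_ifs with h
    · rfl
    · rw [wordImage_apply_eq_zero_of_length_lt hf (by simpa using h), mul_zero]
  calc kappa f (cmulR A B) w
      = ∑ v ∈ wordsUpTo w.length, ∑ i ∈ range (v.length + 1),
          A (v.take i) * B (v.drop i) * wordImage f (v.take i ++ v.drop i) w := by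
        rw [kappa_apply]
        exact sum_congr rfl fun v _ => hsplit v
    _ = ∑ p ∈ wordsUpTo w.length, ∑ q ∈ wordsUpTo w.length,
          A p * B q * wordImage f (p ++ q) w := by
        rw [sum_wordsUpTo_sum_take_drop w.length fun p q => A p * B q * wordImage f (p ++ q) w]
        simp only [hvanish]
    _ = ∑ j ∈ range (w.length + 1), (∑ p ∈ wordsUpTo w.length, A p * wordImage f p (w.take j)) *
          ∑ q ∈ wordsUpTo w.length, B q * wordImage f q (w.drop j) := by
        simp only [wordImage_append, cmulR, mul_sum, sum_mul]
        rw [sum_comm_cycle]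
        refine sum_congr rfl fun j _ => ?_
        rw [sum_comm]
        exact sum_congr rfl fun q _ => sum_congr rfl fun p _ => by ring
    _ = cmulR (kappa f A) (kappa f B) w := by
        refine sum_congr rfl fun j _ => ?_
        rw [kappa_apply_eq_sum hf A (N := w.length) (by simp),
          kappa_apply_eq_sum hf B (N := w.length) (by simp)]

theorem kappa_wordImage (g : W → R) (v : W) :
    kappa f (wordImage g v) = wordImage (kappa f g) v := by
  induction v with
  | nil => exact kappa_oneR hf
  | cons a t ih =>
    rw [wordImage, wordImage, kappa_cmulR hf, ih]
    split_ifs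
    · rfl
    · rw [kappa_x0R hf]

end ZeroConstantTerm

theorem kappa_kappa {f g : W → R} (hf : f [] = 0) (hg : g [] = 0) :
    kappa (kappa f g) = kappa f ∘ kappa g := by
  funext Ψ w
  calc kappa (kappa f g) Ψ w
      = ∑ v ∈ wordsUpTo w.length, ∑ u ∈ wordsUpTo w.length,
          Ψ v * wordImage g v u * wordImage f u w := by
        rw [kappa_apply]
        refine sum_congr rfl fun v _ => ?_
        rw [← kappa_wordImage hf, kappa_apply, mul_sum]
        exact sum_congr rfl fun u _ => (mul_assoc _ _ _).symm
    _ = ∑ u ∈ wordsUpTo w.length, kappa g Ψ u * wordImage f u w := by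
        rw [sum_comm]
        refine sum_congr rfl fun u hu => ?_
        rw [kappa_apply_eq_sum hg Ψ (mem_wordsUpTo.mp hu), sum_mul]
    _ = kappa f (kappa g Ψ) w := (kappa_apply _ _ _).symm

theorem TM1mem.constant_coeff_eq_zero {Φ : W → R} (hΦ : TM1mem Φ) : Φ [] = 0 :=
  hΦ.1 0

theorem tau_multiplicative_injective_general (R : Type*) [CommRing R] :
    (∀ Φ₁ Φ₂ : W → R, TM1mem Φ₁ → TM1mem Φ₂ →
      kappa (kappa Φ₁ Φ₂) = (kappa Φ₁) ∘ (kappa Φ₂)) ∧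
    (∀ Φ₁ Φ₂ : W → R, TM1mem Φ₁ → TM1mem Φ₂ →
      kappa Φ₁ = kappa Φ₂ → Φ₁ = Φ₂) := by
  refine ⟨fun Φ₁ Φ₂ h₁ h₂ => kappa_kappa h₁.constant_coeff_eq_zero h₂.constant_coeff_eq_zero,
    fun Φ₁ Φ₂ h₁ h₂ h => ?_⟩
  rw [← kappa_x1R h₁.constant_coeff_eq_zero, ← kappa_x1R h₂.constant_coeff_eq_zero, h]

/-- The map τ : TM₁(R) → End(R⟨⟨x₀,x₁⟩⟩), Φ ↦ κ_Φ, is multiplicative for ⊛₁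
(τ(Φ₁ ⊛₁ Φ₂) = τ(Φ₁) ∘ τ(Φ₂)) and injective. -/
theorem tau_multiplicative_injective (R : Type*) [CommRing R] [Algebra ℚ R] :
    (∀ Φ₁ Φ₂ : W → R, TM1mem Φ₁ → TM1mem Φ₂ →
      kappa (kappa Φ₁ Φ₂) = (kappa Φ₁) ∘ (kappa Φ₂)) ∧
    (∀ Φ₁ Φ₂ : W → R, TM1mem Φ₁ → TM1mem Φ₂ →
      kappa Φ₁ = kappa Φ₂ → Φ₁ = Φ₂) :=
  tau_multiplicative_injective_general R
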